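/- Let G be a finite simple graph with vertex set I and fix a vertex i ∈ I. The map sending an element w ∈ M(I, G) which uses each vertex exactly once and has initial alphabet {i} to the orientation G^w of G (in which an edge (u,v) is oriented from u to v iff u appears to the left of v in w) is a well-defined injection into the set of acyclic orientations of G with unique sink i. -/

import Mathlib

/-!
Erasing from a word all letters outside a clique of `G` commutes with the exchange of
non-adjacent letters, so it is an invariant of the trace. For a clique `{u, v}` this says that
the relative order of adjacent letters, hence `G^w`, depends only on the trace; for `{j}`, that
multiplicities do. In a word with distinct letters, `j` lies in the initial alphabet exactly when
no neighbour of `j` follows it, i.e. when `j` is a sink of `G^w`; so `i` is the unique sink, and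
acyclicity comes from the order of positions. Conversely, if two such words give the same
orientation, the first letter `a` of one has no neighbour before it in the other, so it can be
commuted to the front there, and induction on the length identifies the two traces.
-/

/-- The commutation relation on the free monoid: two letters may be exchanged
whenever they are not adjacent in `G`. -/
def traceRel {V : Type*} (G : SimpleGraph V) : FreeMonoid V → FreeMonoid V → Prop :=
  fun x y => ∃ a b : V, ¬ G.Adj a b ∧
    x = FreeMonoid.of a * FreeMonoid.of b ∧ y = FreeMonoid.of b * FreeMonoid.of a

/-- The congruence on the free monoid generated by the commutation relations. -/
def traceCon {V : Type*} (G : SimpleGraph V) : Con (FreeMonoid V) := conGen (traceRel G)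

/-- The free partially commutative monoid (trace monoid) `M(I, G)` associated to `G`. -/
abbrev TraceMonoid {V : Type*} (G : SimpleGraph V) := (traceCon G).Quotient

/-- The element of the trace monoid represented by a list of letters. -/
def traceMk {V : Type*} (G : SimpleGraph V) (L : List V) : TraceMonoid G :=
  (traceCon G).mk' (FreeMonoid.ofList L)

/-- The multiplicity of the letter `i` in the initial alphabet multiset `IA_m(w)`:
the largest `m` such that `w = u · iᵐ`. -/
noncomputable def IAcount {V : Type*} (G : SimpleGraph V) (w : TraceMonoid G) (i : V) : ℕ :=
  sSup {m : ℕ | ∃ u : TraceMonoid G, w = u * (traceMk G [i]) ^ m}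

/-- The initial alphabet `IA(w)` of a trace: the set of letters `i` with `w = u · i`. -/
def IAset {V : Type*} (G : SimpleGraph V) (w : TraceMonoid G) : Set V :=
  {i | ∃ u : TraceMonoid G, w = u * traceMk G [i]}

/-- The orientation `G^w` of `G` determined by a linear word `L`: an edge `(u,v)` is oriented
from `u` to `v` iff `u` appears to the left of `v` in `L`. -/
def wordOrient {V : Type*} [DecidableEq V] (G : SimpleGraph V) (L : List V) (u v : V) : Prop :=
  G.Adj u v ∧ L.idxOf u < L.idxOf v


namespace List

variable {α : Type*}

theorem mem_of_pair_sublist_append_singleton {l : List α} {a b : α} (h : [a, b] <+ l ++ [a]) :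
    a ∈ l := by
  obtain ⟨l₁, l₂, he, h₁, h₂⟩ := sublist_append_iff.mp h
  rcases l₁ with _ | ⟨c, l₁⟩
  · simp only [nil_append] at he
    subst he
    simpa using h₂.length_le
  · exact h₁.subset (by simp_all)

variable [DecidableEq α]

theorem idxOf_lt_idxOf_iff_pair_sublist {L : List α} {u v : α} (hL : L.Nodup) (hv : v ∈ L) :
    L.idxOf u < L.idxOf v ↔ [u, v] <+ L := by
  induction L with
  | nil => simp at hv
  | cons a t ih =>
    obtain ⟨hat, ht⟩ := nodup_cons.mp hL
    by_cases hua : u = a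
    · subst hua
      rw [idxOf_cons_self, cons_sublist_cons, singleton_sublist]
      rcases eq_or_ne v u with rfl | hvu
      · simpa using hat
      · simp [idxOf_cons_ne _ hvu.symm, (mem_cons.mp hv).resolve_left hvu]
    · by_cases hva : v = a
      · subst hva
        simpa [idxOf_cons_ne _ (Ne.symm hua), sublist_cons_iff, hua] using
          fun h : [u, v] <+ t => hat (h.subset (by simp))
      · have hvt : v ∈ t := (mem_cons.mp hv).resolve_left hva
        rw [idxOf_cons_ne _ (Ne.symm hua), idxOf_cons_ne _ (Ne.symm hva), Nat.succ_lt_succ_iff,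
          ih ht hvt, sublist_cons_iff]
        simp [hua]

theorem sublist_erase_iff {l L : List α} {a : α} (ha : a ∉ l) : l <+ L.erase a ↔ l <+ L :=
  ⟨fun h => h.trans erase_sublist, fun h => by simpa [erase_of_not_mem ha] using h.erase a⟩

end List

def FreeMonoid.filterHom {α : Type*} (p : α → Prop) [DecidablePred p] :
    FreeMonoid α →* FreeMonoid α where
  toFun w := FreeMonoid.ofList (w.toList.filter p)
  map_one' := rfl
  map_mul' x y := List.filter_append (FreeMonoid.toList x) (FreeMonoid.toList y)

section TraceMonoid

open List

variable {V : Type*} {G : SimpleGraph V}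

theorem traceMk_append (L L' : List V) :
    traceMk G (L ++ L') = traceMk G L * traceMk G L' :=
  map_mul (traceCon G).mk' _ _

theorem traceMk_cons_eq_append_singleton {a : V} {l : List V} (h : ∀ x ∈ l, ¬ G.Adj a x) :
    traceMk G (a :: l) = traceMk G (l ++ [a]) := by
  induction l with
  | nil => rfl
  | cons b l ih =>
    have hab : traceMk G [a, b] = traceMk G [b, a] :=
      (Con.eq _).mpr (ConGen.Rel.of _ _ ⟨a, b, h b (List.mem_cons_self ..), rfl, rfl⟩)
    calc traceMk G (a :: b :: l) = traceMk G [a, b] * traceMk G l := traceMk_append [a, b] l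
      _ = traceMk G [b] * traceMk G (a :: l) := by
        rw [hab, ← traceMk_append, ← traceMk_append]; rfl
      _ = traceMk G (b :: l ++ [a]) := by
        rw [ih fun x hx => h x (List.mem_cons_of_mem _ hx), ← traceMk_append]; rfl

theorem traceCon_le_ker_filterHom {p : V → Prop} [DecidablePred p] (hp : G.IsClique {x | p x}) :
    traceCon G ≤ Con.ker (FreeMonoid.filterHom p) := by
  refine Con.conGen_le.mpr ?_
  rintro _ _ ⟨a, b, hab, rfl, rfl⟩
  rw [Con.ker_rel]
  show FreeMonoid.ofList ([a, b].filter p) = FreeMonoid.ofList ([b, a].filter p)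
  by_cases ha : p a <;> by_cases hb : p b <;> simp [ha, hb]
  obtain rfl : a = b := not_ne_iff.mp fun hne => hab (hp ha hb hne)
  rfl

theorem filter_eq_of_traceMk_eq {p : V → Prop} [DecidablePred p] (hp : G.IsClique {x | p x})
    {L L' : List V} (h : traceMk G L = traceMk G L') : L.filter p = L'.filter p :=
  congrArg FreeMonoid.toList (traceCon_le_ker_filterHom hp ((Con.eq _).mp h))

theorem sublist_iff_of_traceMk_eq [DecidableEq V] {l L L' : List V}
    (hl : G.IsClique {x | x ∈ l}) (h : traceMk G L = traceMk G L') : l <+ L ↔ l <+ L' := by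
  have through_filter (M : List V) : l <+ M ↔ l <+ M.filter (· ∈ l) :=
    ⟨fun hM => by simpa [filter_eq_self.mpr fun _ => decide_eq_true] using hM.filter (· ∈ l),
      fun hM => hM.trans List.filter_sublist⟩
  rw [through_filter, through_filter L', filter_eq_of_traceMk_eq hl h]

theorem pair_sublist_iff_of_traceMk_eq [DecidableEq V] {u v : V} {L L' : List V}
    (huv : u ≠ v → G.Adj u v) (h : traceMk G L = traceMk G L') : [u, v] <+ L ↔ [u, v] <+ L' :=
  sublist_iff_of_traceMk_eq (by simpa [Set.insert_def] using SimpleGraph.isClique_pair.mpr huv) h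

theorem nodup_of_traceMk_eq [DecidableEq V] {L L' : List V} (hL : L.Nodup)
    (h : traceMk G L = traceMk G L') : L'.Nodup :=
  List.nodup_iff_sublist.mpr fun a =>
    (pair_sublist_iff_of_traceMk_eq (absurd rfl) h).not.mp (List.nodup_iff_sublist.mp hL a)

theorem traceMk_append_cons {l₁ l₂ : List V} {a : V} (h : ∀ x ∈ l₂, ¬ G.Adj a x) :
    traceMk G (l₁ ++ a :: l₂) = traceMk G (l₁ ++ l₂) * traceMk G [a] := by
  rw [traceMk_append, traceMk_cons_eq_append_singleton h, traceMk_append, traceMk_append,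
    mul_assoc]

theorem traceMk_eq_cons_erase [DecidableEq V] {L : List V} {a : V} (ha : a ∈ L)
    (h : ∀ x, G.Adj x a → ¬ [x, a] <+ L) : traceMk G L = traceMk G (a :: L.erase a) := by
  obtain ⟨l₁, l₂, hal₁, rfl, herase⟩ := exists_erase_eq ha
  have hl₁ : ∀ x ∈ l₁, ¬ G.Adj a x := fun x hx hax =>
    h x hax.symm (cons_sublist_iff.mpr ⟨l₁, a :: l₂, rfl, hx, by simp⟩)
  rw [herase, ← singleton_append, ← append_assoc, traceMk_append,
    ← traceMk_cons_eq_append_singleton hl₁, ← traceMk_append]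
  rfl

theorem mem_IAset_traceMk_iff [DecidableEq V] {L : List V} {j : V} (hL : L.Nodup) (hj : j ∈ L) :
    j ∈ IAset G (traceMk G L) ↔ ∀ v, G.Adj j v → ¬ [j, v] <+ L := by
  constructor
  · rintro ⟨w, hw⟩ v hjv hsub
    obtain ⟨M, rfl⟩ := (traceCon G).mk'_surjective w
    have hLM : traceMk G L = traceMk G (M.toList ++ [j]) := by rw [hw, traceMk_append]; rfl
    have hjM : j ∈ M.toList := mem_of_pair_sublist_append_singleton
      ((pair_sublist_iff_of_traceMk_eq (fun _ => hjv) hLM).mp hsub)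
    exact nodup_iff_sublist.mp (nodup_of_traceMk_eq hL hLM) j
      (by simpa using (singleton_sublist.mpr hjM).append (Sublist.refl [j]))
  · intro h
    obtain ⟨l₁, l₂, rfl⟩ := append_of_mem hj
    refine ⟨traceMk G (l₁ ++ l₂), traceMk_append_cons fun x hx hjx => h x hjx ?_⟩
    exact sublist_append_of_sublist_right (cons_sublist_cons.mpr (singleton_sublist.mpr hx))

end TraceMonoid

section WordOrient

variable {V : Type*} [DecidableEq V] {G : SimpleGraph V}

open List

theorem wordOrient_iff_pair_sublist {L : List V} {u v : V} (hL : L.Nodup) (hv : v ∈ L) :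
    wordOrient G L u v ↔ G.Adj u v ∧ [u, v] <+ L :=
  and_congr_right' (idxOf_lt_idxOf_iff_pair_sublist hL hv)

theorem wordOrient_eq_of_traceMk_eq {L L' : List V} (hL : L.Nodup) (hL' : L'.Nodup)
    (hall : ∀ v, v ∈ L) (hall' : ∀ v, v ∈ L') (h : traceMk G L = traceMk G L') :
    wordOrient G L = wordOrient G L' := by
  ext u v
  rw [wordOrient_iff_pair_sublist hL (hall v), wordOrient_iff_pair_sublist hL' (hall' v)]
  exact and_congr_right fun huv => pair_sublist_iff_of_traceMk_eq (fun _ => huv) h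

theorem wordOrient_iff_not_wordOrient_swap {L : List V} {u v : V} (hu : u ∈ L)
    (huv : G.Adj u v) : wordOrient G L u v ↔ ¬ wordOrient G L v u := by
  have hidx : L.idxOf u ≠ L.idxOf v := fun h => huv.ne ((idxOf_inj hu).mp h)
  simp only [wordOrient, huv, huv.symm, true_and, not_lt]
  omega

theorem not_transGen_wordOrient_self (L : List V) (x : V) :
    ¬ Relation.TransGen (wordOrient G L) x x := by
  intro h
  have hlt : Relation.TransGen (· < ·) (L.idxOf x) (L.idxOf x) := h.lift _ fun _ _ huv => huv.2
  rw [Relation.transGen_eq_self] at hlt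
  exact lt_irrefl _ hlt

theorem mem_IAset_traceMk_iff_forall_not_wordOrient {L : List V} {j : V} (hL : L.Nodup)
    (hall : ∀ v, v ∈ L) : j ∈ IAset G (traceMk G L) ↔ ∀ v, ¬ wordOrient G L j v := by
  rw [mem_IAset_traceMk_iff hL (hall j)]
  simp only [wordOrient_iff_pair_sublist hL (hall _), not_and]

theorem traceMk_eq_of_perm_of_pair_sublist_iff {L L' : List V} (hL : L.Nodup) (hL' : L'.Nodup)
    (hp : L ~ L')
    (h : ∀ u v, G.Adj u v → ([u, v] <+ L ↔ [u, v] <+ L')) : traceMk G L = traceMk G L' := by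
  induction L' generalizing L with
  | nil => rw [hp.eq_nil]
  | cons a t ih =>
    obtain ⟨hat, ht⟩ := nodup_cons.mp hL'
    have ha : a ∈ L := hp.mem_iff.mpr mem_cons_self
    have hfirst : ∀ x, G.Adj x a → ¬ [x, a] <+ L := fun x hxa hxaL => by
      rcases sublist_cons_iff.mp ((h x a hxa).mp hxaL) with hs | ⟨r, hr, hs⟩
      · exact hat (hs.subset (by simp))
      · exact hat (hs.subset ((cons.inj hr).2 ▸ mem_singleton_self a))
    have herase : ∀ u v, G.Adj u v → ([u, v] <+ L.erase a ↔ [u, v] <+ t) := by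
      intro u v huv
      by_cases hau : a ∈ [u, v]
      · exact iff_of_false (fun hs => hL.not_mem_erase (hs.subset hau))
          (fun hs => hat (hs.subset hau))
      · rw [sublist_erase_iff hau, h u v huv, ← sublist_erase_iff hau, erase_cons_head]
    rw [traceMk_eq_cons_erase ha hfirst, ← singleton_append, traceMk_append,
      ih (hL.erase a) ht (by simpa using hp.erase a) herase, ← traceMk_append]
    rfl

theorem traceMk_eq_of_wordOrient_eq {L L' : List V} (hL : L.Nodup) (hL' : L'.Nodup)
    (hall : ∀ v, v ∈ L) (hall' : ∀ v, v ∈ L') (h : wordOrient G L = wordOrient G L') :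
    traceMk G L = traceMk G L' := by
  have hp : L ~ L' := (perm_ext_iff_of_nodup hL hL').mpr fun a => by simp [hall, hall']
  refine traceMk_eq_of_perm_of_pair_sublist_iff hL hL' hp fun u v huv => ?_
  have huv' := (congrFun₂ h u v).to_iff
  rw [wordOrient_iff_pair_sublist hL (hall v), wordOrient_iff_pair_sublist hL' (hall' v)] at huv'
  exact (and_congr_right_iff.mp huv') huv

end WordOrient

theorem stmt10_general {V : Type*} [DecidableEq V] (G : SimpleGraph V) (i : V) :
    (∀ L L' : List V,
      (L.Nodup ∧ (∀ v, v ∈ L) ∧ IAset G (traceMk G L) = {i}) →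
      (L'.Nodup ∧ (∀ v, v ∈ L') ∧ IAset G (traceMk G L') = {i}) →
      traceMk G L = traceMk G L' → wordOrient G L = wordOrient G L') ∧
    (∀ L : List V, (L.Nodup ∧ (∀ v, v ∈ L) ∧ IAset G (traceMk G L) = {i}) →
      (∀ u v, G.Adj u v → (wordOrient G L u v ↔ ¬ wordOrient G L v u)) ∧
      (∀ x, ¬ Relation.TransGen (wordOrient G L) x x) ∧
      (∀ u, ¬ wordOrient G L i u) ∧
      (∀ v, (∀ u, ¬ wordOrient G L v u) → v = i)) ∧
    (∀ L L' : List V,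
      (L.Nodup ∧ (∀ v, v ∈ L) ∧ IAset G (traceMk G L) = {i}) →
      (L'.Nodup ∧ (∀ v, v ∈ L') ∧ IAset G (traceMk G L') = {i}) →
      wordOrient G L = wordOrient G L' → traceMk G L = traceMk G L') := by
  refine ⟨fun L L' ⟨hL, hall, _⟩ ⟨hL', hall', _⟩ =>
      wordOrient_eq_of_traceMk_eq hL hL' hall hall',
    fun L ⟨hL, hall, hIA⟩ => ?_,
    fun L L' ⟨hL, hall, _⟩ ⟨hL', hall', _⟩ =>
      traceMk_eq_of_wordOrient_eq hL hL' hall hall'⟩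
  have isSink_iff (v : V) : (∀ u, ¬ wordOrient G L v u) ↔ v = i := by
    rw [← mem_IAset_traceMk_iff_forall_not_wordOrient hL hall, hIA, Set.mem_singleton_iff]
  exact ⟨fun u v => wordOrient_iff_not_wordOrient_swap (hall u), not_transGen_wordOrient_self L,
    (isSink_iff i).mpr rfl, fun v => (isSink_iff v).mp⟩

/-- On words `w ∈ M(I,G)` using each vertex exactly once and with initial
alphabet `{i}`, the assignment `w ↦ G^w` is (1) well defined on trace-equivalence classes,
(2) lands in acyclic orientations of `G` with unique sink `i`, and (3) is injective. -/
theorem stmt10 {V : Type*} [Fintype V] [DecidableEq V] (G : SimpleGraph V) (i : V) :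
    (∀ L L' : List V,
      (L.Nodup ∧ (∀ v, v ∈ L) ∧ IAset G (traceMk G L) = {i}) →
      (L'.Nodup ∧ (∀ v, v ∈ L') ∧ IAset G (traceMk G L') = {i}) →
      traceMk G L = traceMk G L' → wordOrient G L = wordOrient G L') ∧
    (∀ L : List V, (L.Nodup ∧ (∀ v, v ∈ L) ∧ IAset G (traceMk G L) = {i}) →
      (∀ u v, G.Adj u v → (wordOrient G L u v ↔ ¬ wordOrient G L v u)) ∧
      (∀ x, ¬ Relation.TransGen (wordOrient G L) x x) ∧
      (∀ u, ¬ wordOrient G L i u) ∧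
      (∀ v, (∀ u, ¬ wordOrient G L v u) → v = i)) ∧
    (∀ L L' : List V,
      (L.Nodup ∧ (∀ v, v ∈ L) ∧ IAset G (traceMk G L) = {i}) →
      (L'.Nodup ∧ (∀ v, v ∈ L') ∧ IAset G (traceMk G L') = {i}) →
      wordOrient G L = wordOrient G L' → traceMk G L = traceMk G L') :=
  stmt10_general G i
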